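/- (Appendix B, Lemma on the decomposition of the probability quadratic form over primary cells.) For the concrete 3-D FDTD-Q region, let Δt > 0, define 𝒫 := Matrix.fromBlocks V'' (-(Δt/(2*ℏ)) • H) (-(Δt/(2*ℏ)) • H) V'' on 𝒩 ⊕ 𝒩, and for each cell c define 𝒫c := Matrix.fromBlocks Vc (-(Δt/(2*ℏ)) • Hc) (-(Δt/(2*ℏ)) • Hc) Vc on (Fin 2 × Fin 2 × Fin 2) ⊕ (Fin 2 × Fin 2 × Fin 2). Then for all ψR ψI : 𝒩 → ℝ: Sum.elim ψR ψI ⬝ᵥ 𝒫.mulVec (Sum.elim ψR ψI) = the sum over all cells c = (k,j,i) ∈ Fin nz × Fin ny × Fin nx of Sum.elim (rc ψR) (rc ψI) ⬝ᵥ 𝒫c.mulVec (Sum.elim (rc ψR) (rc ψI)). -/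

import Mathlib

open Matrix Kronecker

noncomputable section

abbrev Node (nx ny nz : ℕ) := Fin (nz+1) × Fin (ny+1) × Fin (nx+1)

/-- Triple Kronecker product with indices identified with `α × β × γ`. -/
def kron3 {α β γ : Type*} (A : Matrix α α ℝ) (B : Matrix β β ℝ) (C : Matrix γ γ ℝ) :
    Matrix (α × β × γ) (α × β × γ) ℝ :=
  Matrix.reindex (Equiv.prodAssoc α β γ) (Equiv.prodAssoc α β γ) (A ⊗ₖ B ⊗ₖ C)

/-- 1-D finite-difference matrix `W p`: `-1` at `j = castSucc i`, `+1` at `j = succ i`. -/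
def Wmat (p : ℕ) : Matrix (Fin p) (Fin (p+1)) ℝ :=
  Matrix.of fun i j => if j = Fin.castSucc i then (-1 : ℝ) else if j = Fin.succ i then 1 else 0

/-- 1-D stiffness matrix `A p = (W p)ᵀ * W p`. -/
def Amat (p : ℕ) : Matrix (Fin (p+1)) (Fin (p+1)) ℝ := (Wmat p)ᵀ * Wmat p

/-- Diagonal matrix with first and last entries `1/2`, all others `1`. -/
def Itl (p : ℕ) : Matrix (Fin (p+1)) (Fin (p+1)) ℝ :=
  Matrix.diagonal (fun i => if i = 0 ∨ i = Fin.last p then (1:ℝ)/2 else 1)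

/-- Secondary-cell volume matrix `V''`. -/
def Vsec (nx ny nz : ℕ) (Δx Δy Δz : ℝ) : Matrix (Node nx ny nz) (Node nx ny nz) ℝ :=
  Matrix.diagonal (fun p =>
    Δx * Δy * Δz * Itl nz p.1 p.1 * Itl ny p.2.1 p.2.1 * Itl nx p.2.2 p.2.2)

/-- The FDTD-Q Hamiltonian matrix `H`. -/
def Hmat (nx ny nz : ℕ) (ℏ m Δx Δy Δz : ℝ) (U : Node nx ny nz → ℝ) :
    Matrix (Node nx ny nz) (Node nx ny nz) ℝ :=
  (ℏ^2/(2*m)) • ((Δy*Δz/Δx) • kron3 (Itl nz) (Itl ny) (Amat nx)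
    + (Δx*Δz/Δy) • kron3 (Itl nz) (Amat ny) (Itl nx)
    + (Δx*Δy/Δz) • kron3 (Amat nz) (Itl ny) (Itl nx))
  + Vsec nx ny nz Δx Δy Δz * Matrix.diagonal U

/-- Diagonal matrix of reciprocal square roots of the diagonal of `V''`. -/
def Dmat (nx ny nz : ℕ) (Δx Δy Δz : ℝ) : Matrix (Node nx ny nz) (Node nx ny nz) ℝ :=
  Matrix.diagonal (fun p => 1 / Real.sqrt (Vsec nx ny nz Δx Δy Δz p p))

/-- The scaled Hamiltonian `Σ = (1/ℏ) • (D * H * D)`. -/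
def Sgm (nx ny nz : ℕ) (ℏ m Δx Δy Δz : ℝ) (U : Node nx ny nz → ℝ) :
    Matrix (Node nx ny nz) (Node nx ny nz) ℝ :=
  (1/ℏ) • (Dmat nx ny nz Δx Δy Δz * Hmat nx ny nz ℏ m Δx Δy Δz U * Dmat nx ny nz Δx Δy Δz)


/-- The corner node index `k + κ` inside `Fin (p+1)`. -/
def cornerIdx {p : ℕ} (k : Fin p) (κ : Fin 2) : Fin (p+1) :=
  ⟨k.val + κ.val, by have h1 := k.isLt; have h2 := κ.isLt; omega⟩

/-- Restriction of a nodal function to the 8 corners of the primary cell `c`. -/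
def restr {nx ny nz : ℕ} (c : Fin nz × Fin ny × Fin nx) (ψ : Node nx ny nz → ℝ) :
    Fin 2 × Fin 2 × Fin 2 → ℝ :=
  fun q => ψ (cornerIdx c.1 q.1, cornerIdx c.2.1 q.2.1, cornerIdx c.2.2 q.2.2)

/-- The 1-D single-cell stiffness matrix `Ŵ = W₁ᵀW₁`. -/
def What : Matrix (Fin 2) (Fin 2) ℝ := !![1, -1; -1, 1]

/-- The single-cell FDTD-Q Hamiltonian of the primary cell `c`. -/
def Hcell (nx ny nz : ℕ) (ℏ m Δx Δy Δz : ℝ) (U : Node nx ny nz → ℝ)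
    (c : Fin nz × Fin ny × Fin nx) :
    Matrix (Fin 2 × Fin 2 × Fin 2) (Fin 2 × Fin 2 × Fin 2) ℝ :=
  (ℏ^2/(2*m)) • ((Δy*Δz/(4*Δx)) • kron3 (1 : Matrix (Fin 2) (Fin 2) ℝ)
        (1 : Matrix (Fin 2) (Fin 2) ℝ) What
    + (Δx*Δz/(4*Δy)) • kron3 (1 : Matrix (Fin 2) (Fin 2) ℝ) What
        (1 : Matrix (Fin 2) (Fin 2) ℝ)
    + (Δx*Δy/(4*Δz)) • kron3 What (1 : Matrix (Fin 2) (Fin 2) ℝ)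
        (1 : Matrix (Fin 2) (Fin 2) ℝ))
  + (Δx*Δy*Δz/8) • Matrix.diagonal (restr c U)

/-- The single-cell volume matrix. -/
def Vcell (Δx Δy Δz : ℝ) :
    Matrix (Fin 2 × Fin 2 × Fin 2) (Fin 2 × Fin 2 × Fin 2) ℝ :=
  (Δx*Δy*Δz/8) • (1 : Matrix (Fin 2 × Fin 2 × Fin 2) (Fin 2 × Fin 2 × Fin 2) ℝ)


/-!
As for finite elements, the global matrices are assembled from the cell matrices: with
`cellSelect c` the 0/1 matrix reading off the eight corner values of cell `c`, one has
`Vsec = ∑ c, (cellSelect c)ᵀ * Vcell * cellSelect c` and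
`Hmat = ∑ c, (cellSelect c)ᵀ * Hcell c * cellSelect c`.
By the mixed-product rule for Kronecker products both reduce to two facts about a segment
`0, …, p` split into `p` unit cells with corner selectors `rₖ`: every inner node lies in two cells
and each end node in one, so `∑ k, rₖᵀ * rₖ = 2 • Itl p`; and row `k` of `Wmat p` is
`[-1, 1] * rₖ`, so `∑ k, rₖᵀ * What * rₖ = (Wmat p)ᵀ * Wmat p = Amat p`. The potential term is
assembled the same way since `diagonal (restr c U) * cellSelect c = cellSelect c * diagonal U`.
Assembled matrices have assembled quadratic forms, which gives the decomposition block by block.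
-/

namespace Matrix

variable {R : Type*} [CommSemiring R] {α β γ α' β' γ' α'' β'' γ'' : Type*}

def kronecker3 (A : Matrix α α' R) (B : Matrix β β' R) (C : Matrix γ γ' R) :
    Matrix (α × β × γ) (α' × β' × γ') R :=
  reindex (Equiv.prodAssoc α β γ) (Equiv.prodAssoc α' β' γ') (A ⊗ₖ B ⊗ₖ C)

@[simp]
theorem kronecker3_apply (A : Matrix α α' R) (B : Matrix β β' R) (C : Matrix γ γ' R)
    (x : α × β × γ) (y : α' × β' × γ') :
    kronecker3 A B C x y = A x.1 y.1 * B x.2.1 y.2.1 * C x.2.2 y.2.2 :=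
  rfl

@[simp]
theorem kronecker3_one_one_one [DecidableEq α] [DecidableEq β] [DecidableEq γ] :
    kronecker3 (1 : Matrix α α R) (1 : Matrix β β R) (1 : Matrix γ γ R) = 1 := by
  simp [kronecker3]

theorem kronecker3_diagonal [DecidableEq α] [DecidableEq β] [DecidableEq γ] (a : α → R)
    (b : β → R) (c : γ → R) :
    kronecker3 (diagonal a) (diagonal b) (diagonal c)
      = diagonal fun x => a x.1 * b x.2.1 * c x.2.2 := by
  rw [kronecker3, diagonal_kronecker_diagonal, diagonal_kronecker_diagonal, reindex_apply,
    submatrix_diagonal_equiv]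
  rfl

theorem transpose_kronecker3 (A : Matrix α α' R) (B : Matrix β β' R) (C : Matrix γ γ' R) :
    (kronecker3 A B C)ᵀ = kronecker3 Aᵀ Bᵀ Cᵀ := by
  ext; simp [mul_comm, mul_left_comm]

theorem kronecker3_mul_kronecker3 [Fintype α'] [Fintype β'] [Fintype γ']
    (A : Matrix α α' R) (B : Matrix β β' R) (C : Matrix γ γ' R)
    (A' : Matrix α' α'' R) (B' : Matrix β' β'' R) (C' : Matrix γ' γ'' R) :
    kronecker3 A B C * kronecker3 A' B' C' = kronecker3 (A * A') (B * B') (C * C') := by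
  simp only [kronecker3, reindex_apply, submatrix_mul_equiv, mul_kronecker_mul]

theorem sum_kronecker3 {ι₁ ι₂ ι₃ : Type*} [Fintype ι₁] [Fintype ι₂] [Fintype ι₃]
    (A : ι₁ → Matrix α α' R) (B : ι₂ → Matrix β β' R) (C : ι₃ → Matrix γ γ' R) :
    ∑ i : ι₁ × ι₂ × ι₃, kronecker3 (A i.1) (B i.2.1) (C i.2.2)
      = kronecker3 (∑ i, A i) (∑ j, B j) (∑ k, C k) := by
  ext x y
  simp only [Matrix.sum_apply, kronecker3_apply, Fintype.sum_prod_type, ← Finset.mul_sum,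
    ← Finset.sum_mul]

theorem sum_transpose_kronecker3_mul_kronecker3_mul {ι₁ ι₂ ι₃ : Type*}
    [Fintype ι₁] [Fintype ι₂] [Fintype ι₃] [Fintype α] [Fintype β] [Fintype γ]
    [Fintype α'] [Fintype β'] [Fintype γ']
    (P : ι₁ → Matrix α' α R) (Q : ι₂ → Matrix β' β R) (S : ι₃ → Matrix γ' γ R)
    (A : Matrix α' α' R) (B : Matrix β' β' R) (C : Matrix γ' γ' R) :
    ∑ i : ι₁ × ι₂ × ι₃, (kronecker3 (P i.1) (Q i.2.1) (S i.2.2))ᵀ * kronecker3 A B C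
        * kronecker3 (P i.1) (Q i.2.1) (S i.2.2)
      = kronecker3 (∑ i, (P i)ᵀ * A * P i) (∑ j, (Q j)ᵀ * B * Q j) (∑ k, (S k)ᵀ * C * S k) := by
  simp only [transpose_kronecker3, kronecker3_mul_kronecker3]
  exact sum_kronecker3 (fun i => (P i)ᵀ * A * P i) (fun j => (Q j)ᵀ * B * Q j)
    (fun k => (S k)ᵀ * C * S k)

section Smul

variable (a : R) (A : Matrix α α' R) (B : Matrix β β' R) (C : Matrix γ γ' R)

theorem kronecker3_smul_left : kronecker3 (a • A) B C = a • kronecker3 A B C := by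
  ext; simp only [kronecker3_apply, smul_apply, smul_eq_mul]; ring

theorem kronecker3_smul_middle : kronecker3 A (a • B) C = a • kronecker3 A B C := by
  ext; simp only [kronecker3_apply, smul_apply, smul_eq_mul]; ring

theorem kronecker3_smul_right : kronecker3 A B (a • C) = a • kronecker3 A B C := by
  ext; simp only [kronecker3_apply, smul_apply, smul_eq_mul]; ring

end Smul

theorem dotProduct_sum_transpose_mul_mul_mulVec {ι m n : Type*} [Fintype ι] [Fintype m]
    [Fintype n] (P : ι → Matrix m n R) (M : ι → Matrix m m R) (u v : n → R) :
    u ⬝ᵥ (∑ i, (P i)ᵀ * M i * P i) *ᵥ v = ∑ i, (P i *ᵥ u) ⬝ᵥ M i *ᵥ (P i *ᵥ v) := by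
  simp only [sum_mulVec, dotProduct_sum, ← mulVec_mulVec, dotProduct_mulVec, vecMul_transpose]

end Matrix

section Segment

variable {p : ℕ}

theorem cornerIdx_zero (k : Fin p) : cornerIdx k 0 = k.castSucc := rfl

theorem cornerIdx_one (k : Fin p) : cornerIdx k 1 = k.succ := rfl

theorem Itl_apply_self (i : Fin (p + 1)) :
    Itl p i i = if i = 0 ∨ i = Fin.last p then 1 / 2 else 1 := by
  simp [Itl]

theorem sum_castSucc_add_succ (hp : 0 < p) (f : Fin (p + 1) → ℝ) :
    ∑ k : Fin p, (f k.castSucc + f k.succ) = ∑ i, 2 * Itl p i i * f i := by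
  have h0 : (0 : Fin (p + 1)) ≠ Fin.last p :=
    Fin.ext_iff.not.mpr (by simp only [Fin.val_zero, Fin.val_last]; omega)
  have hweight : ∀ i, 2 * Itl p i i * f i
      = 2 * f i - (if i = 0 then f i else 0) - (if i = Fin.last p then f i else 0) := by
    intro i
    by_cases h1 : i = 0 <;> by_cases h2 : i = Fin.last p <;> simp_all [Itl_apply_self] <;> ring
  have hcast := Fin.sum_univ_castSucc f
  have hsucc := Fin.sum_univ_succ f
  simp only [hweight, Finset.sum_sub_distrib, Finset.sum_ite_eq', Finset.mem_univ, if_true,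
    ← Finset.mul_sum, Finset.sum_add_distrib]
  linarith

def cornerSelect (k : Fin p) : Matrix (Fin 2) (Fin (p + 1)) ℝ :=
  of fun κ i => if i = cornerIdx k κ then 1 else 0

theorem sum_transpose_cornerSelect_mul_cornerSelect (hp : 0 < p) :
    ∑ k, (cornerSelect k)ᵀ * cornerSelect k = (2 : ℝ) • Itl p := by
  ext i j
  have := sum_castSucc_add_succ hp fun n => (if i = n then 1 else 0) * (if j = n then 1 else 0)
  simp only [Matrix.sum_apply, mul_apply, Fin.sum_univ_two, transpose_apply, cornerSelect,
    of_apply, cornerIdx_zero, cornerIdx_one] at this ⊢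
  refine this.trans ?_
  by_cases hij : i = j <;> simp [hij, Itl]

theorem What_eq_vecMulVec : What = vecMulVec ![-1, 1] ![-1, 1] := by
  ext i j; fin_cases i <;> fin_cases j <;> simp [What, vecMulVec_apply]

theorem Wmat_row_eq_vecMul_cornerSelect (k : Fin p) :
    Wmat p k = ![-1, 1] ᵥ* cornerSelect k := by
  ext i
  have hne : k.castSucc ≠ k.succ := Fin.castSucc_lt_succ.ne
  by_cases h1 : i = k.castSucc <;> by_cases h2 : i = k.succ <;>
    simp_all [Wmat, cornerSelect, vecMul, dotProduct, Fin.sum_univ_two, cornerIdx_zero,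
      cornerIdx_one]

theorem sum_transpose_cornerSelect_mul_What_mul :
    ∑ k, (cornerSelect k)ᵀ * What * cornerSelect k = Amat p := by
  have hrank_one : ∀ k : Fin p,
      (cornerSelect k)ᵀ * What * cornerSelect k = vecMulVec (Wmat p k) (Wmat p k) := by
    intro k
    rw [What_eq_vecMulVec, mul_vecMulVec, vecMulVec_mul, mulVec_transpose,
      Wmat_row_eq_vecMul_cornerSelect]
  ext i j
  simp only [hrank_one, Matrix.sum_apply, vecMulVec_apply, Amat, mul_apply, transpose_apply]

end Segment

theorem kron3_eq_kronecker3 {α β γ : Type*} (A : Matrix α α ℝ) (B : Matrix β β ℝ)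
    (C : Matrix γ γ ℝ) : kron3 A B C = Matrix.kronecker3 A B C := rfl

section Cell

variable {nx ny nz : ℕ}

def cellSelect (c : Fin nz × Fin ny × Fin nx) :
    Matrix (Fin 2 × Fin 2 × Fin 2) (Node nx ny nz) ℝ :=
  kronecker3 (cornerSelect c.1) (cornerSelect c.2.1) (cornerSelect c.2.2)

theorem cellSelect_apply (c : Fin nz × Fin ny × Fin nx) (q : Fin 2 × Fin 2 × Fin 2)
    (n : Node nx ny nz) :
    cellSelect c q n
      = if n = (cornerIdx c.1 q.1, cornerIdx c.2.1 q.2.1, cornerIdx c.2.2 q.2.2) then 1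
        else 0 := by
  simp only [cellSelect, kronecker3_apply, cornerSelect, of_apply, Prod.ext_iff]
  split_ifs <;> simp_all

theorem cellSelect_mulVec (c : Fin nz × Fin ny × Fin nx) (ψ : Node nx ny nz → ℝ) :
    cellSelect c *ᵥ ψ = restr c ψ := by
  ext q
  simp [mulVec, dotProduct, cellSelect_apply, restr]

theorem diagonal_restr_mul_cellSelect (c : Fin nz × Fin ny × Fin nx) (d : Node nx ny nz → ℝ) :
    diagonal (restr c d) * cellSelect c = cellSelect c * diagonal d := by
  ext q n
  by_cases h : n = (cornerIdx c.1 q.1, cornerIdx c.2.1 q.2.1, cornerIdx c.2.2 q.2.2) <;>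
    simp [cellSelect_apply, h, restr]

theorem sum_transpose_cellSelect_mul_kron3_mul (A : Matrix (Fin 2) (Fin 2) ℝ)
    (B : Matrix (Fin 2) (Fin 2) ℝ) (C : Matrix (Fin 2) (Fin 2) ℝ) :
    ∑ c : Fin nz × Fin ny × Fin nx, (cellSelect c)ᵀ * kron3 A B C * cellSelect c
      = kron3 (∑ k, (cornerSelect k)ᵀ * A * cornerSelect k)
          (∑ j, (cornerSelect j)ᵀ * B * cornerSelect j)
          (∑ i, (cornerSelect i)ᵀ * C * cornerSelect i) :=
  sum_transpose_kronecker3_mul_kronecker3_mul _ _ _ A B C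

theorem sum_transpose_cellSelect_mul_cellSelect (hnx : 0 < nx) (hny : 0 < ny) (hnz : 0 < nz) :
    ∑ c : Fin nz × Fin ny × Fin nx, (cellSelect c)ᵀ * cellSelect c
      = (8 : ℝ) • kron3 (Itl nz) (Itl ny) (Itl nx) := by
  have h := sum_transpose_cellSelect_mul_kron3_mul (nx := nx) (ny := ny) (nz := nz) 1 1 1
  simp only [Matrix.mul_one, sum_transpose_cornerSelect_mul_cornerSelect hnx,
    sum_transpose_cornerSelect_mul_cornerSelect hny,
    sum_transpose_cornerSelect_mul_cornerSelect hnz, kron3_eq_kronecker3,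
    kronecker3_one_one_one] at h
  rw [h, kron3_eq_kronecker3, kronecker3_smul_left, kronecker3_smul_middle, kronecker3_smul_right,
    smul_smul, smul_smul]
  norm_num

end Cell

section Assembly

variable {nx ny nz : ℕ}

theorem Vsec_eq_smul_kron3 (Δx Δy Δz : ℝ) :
    Vsec nx ny nz Δx Δy Δz = (Δx * Δy * Δz) • kron3 (Itl nz) (Itl ny) (Itl nx) := by
  simp only [Vsec, kron3_eq_kronecker3, Itl, kronecker3_diagonal, diagonal_apply_eq,
    ← diagonal_smul]
  congr 1
  ext x
  simp only [Pi.smul_apply, smul_eq_mul]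
  ring

theorem Vsec_eq_sum_transpose_cellSelect_mul_Vcell_mul (hnx : 0 < nx) (hny : 0 < ny)
    (hnz : 0 < nz) (Δx Δy Δz : ℝ) :
    Vsec nx ny nz Δx Δy Δz = ∑ c, (cellSelect c)ᵀ * Vcell Δx Δy Δz * cellSelect c := by
  simp only [Vcell, Matrix.mul_smul, Matrix.smul_mul, Matrix.mul_one]
  rw [← Finset.smul_sum, sum_transpose_cellSelect_mul_cellSelect hnx hny hnz, Vsec_eq_smul_kron3,
    smul_smul]
  norm_num

theorem Hmat_eq_sum_transpose_cellSelect_mul_Hcell_mul (hnx : 0 < nx) (hny : 0 < ny)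
    (hnz : 0 < nz) (ℏ m Δx Δy Δz : ℝ) (U : Node nx ny nz → ℝ) :
    Hmat nx ny nz ℏ m Δx Δy Δz U
      = ∑ c, (cellSelect c)ᵀ * Hcell nx ny nz ℏ m Δx Δy Δz U c * cellSelect c := by
  have hpotential : ∑ c : Fin nz × Fin ny × Fin nx,
      (cellSelect c)ᵀ * diagonal (restr c U) * cellSelect c
        = (8 : ℝ) • kron3 (Itl nz) (Itl ny) (Itl nx) * diagonal U := calc
      _ = ∑ c : Fin nz × Fin ny × Fin nx, (cellSelect c)ᵀ * cellSelect c * diagonal U := by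
        simp only [Matrix.mul_assoc, diagonal_restr_mul_cellSelect]
      _ = _ := by rw [← Finset.sum_mul, sum_transpose_cellSelect_mul_cellSelect hnx hny hnz]
  simp only [Hcell, Matrix.add_mul, Matrix.mul_add, Matrix.smul_mul, Matrix.mul_smul]
  simp only [Finset.sum_add_distrib, ← Finset.smul_sum]
  simp only [sum_transpose_cellSelect_mul_kron3_mul, hpotential,
    Matrix.mul_one, sum_transpose_cornerSelect_mul_cornerSelect hnx,
    sum_transpose_cornerSelect_mul_cornerSelect hny,
    sum_transpose_cornerSelect_mul_cornerSelect hnz, sum_transpose_cornerSelect_mul_What_mul]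
  simp only [kron3_eq_kronecker3, kronecker3_smul_left, kronecker3_smul_middle,
    kronecker3_smul_right, Hmat, Vsec_eq_smul_kron3, Matrix.smul_mul]
  module

end Assembly

theorem fdtdq_probability_quadratic_form_cell_decomposition_general
    (nx ny nz : ℕ) (hnx : 0 < nx) (hny : 0 < ny) (hnz : 0 < nz)
    (ℏ m Δx Δy Δz : ℝ)
    (Δt : ℝ)
    (U : Node nx ny nz → ℝ) :
    ∀ ψR ψI : Node nx ny nz → ℝ,
      Sum.elim ψR ψI ⬝ᵥ
        (Matrix.fromBlocks (Vsec nx ny nz Δx Δy Δz)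
          (-(Δt/(2*ℏ)) • Hmat nx ny nz ℏ m Δx Δy Δz U)
          (-(Δt/(2*ℏ)) • Hmat nx ny nz ℏ m Δx Δy Δz U)
          (Vsec nx ny nz Δx Δy Δz)).mulVec (Sum.elim ψR ψI)
      = ∑ c : Fin nz × Fin ny × Fin nx,
          Sum.elim (restr c ψR) (restr c ψI) ⬝ᵥ
            (Matrix.fromBlocks (Vcell Δx Δy Δz)
              (-(Δt/(2*ℏ)) • Hcell nx ny nz ℏ m Δx Δy Δz U c)
              (-(Δt/(2*ℏ)) • Hcell nx ny nz ℏ m Δx Δy Δz U c)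
              (Vcell Δx Δy Δz)).mulVec (Sum.elim (restr c ψR) (restr c ψI)) := by
  intro ψR ψI
  rw [Vsec_eq_sum_transpose_cellSelect_mul_Vcell_mul hnx hny hnz,
    Hmat_eq_sum_transpose_cellSelect_mul_Hcell_mul hnx hny hnz]
  simp only [fromBlocks_mulVec, sumElim_dotProduct_sumElim, dotProduct_add, smul_mulVec,
    dotProduct_smul, dotProduct_sum_transpose_mul_mul_mulVec, cellSelect_mulVec,
    Sum.elim_comp_inl, Sum.elim_comp_inr, Finset.sum_add_distrib, ← Finset.smul_sum]

/-- Appendix B of the paper: the probability quadratic form of the whole region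
decomposes as the sum of the single-cell probability quadratic forms over all
primary cells. -/
theorem fdtdq_probability_quadratic_form_cell_decomposition
    (nx ny nz : ℕ) (hnx : 0 < nx) (hny : 0 < ny) (hnz : 0 < nz)
    (ℏ m Δx Δy Δz : ℝ) (hℏ : 0 < ℏ) (hm : 0 < m)
    (hΔx : 0 < Δx) (hΔy : 0 < Δy) (hΔz : 0 < Δz)
    (Δt : ℝ) (hΔt : 0 < Δt)
    (U : Node nx ny nz → ℝ) :
    ∀ ψR ψI : Node nx ny nz → ℝ,
      Sum.elim ψR ψI ⬝ᵥ
        (Matrix.fromBlocks (Vsec nx ny nz Δx Δy Δz)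
          (-(Δt/(2*ℏ)) • Hmat nx ny nz ℏ m Δx Δy Δz U)
          (-(Δt/(2*ℏ)) • Hmat nx ny nz ℏ m Δx Δy Δz U)
          (Vsec nx ny nz Δx Δy Δz)).mulVec (Sum.elim ψR ψI)
      = ∑ c : Fin nz × Fin ny × Fin nx,
          Sum.elim (restr c ψR) (restr c ψI) ⬝ᵥ
            (Matrix.fromBlocks (Vcell Δx Δy Δz)
              (-(Δt/(2*ℏ)) • Hcell nx ny nz ℏ m Δx Δy Δz U c)
              (-(Δt/(2*ℏ)) • Hcell nx ny nz ℏ m Δx Δy Δz U c)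
              (Vcell Δx Δy Δz)).mulVec (Sum.elim (restr c ψR) (restr c ψI)) :=
  fdtdq_probability_quadratic_form_cell_decomposition_general nx ny nz hnx hny hnz ℏ m Δx Δy Δz Δt U

end
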